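/- Constant-term vanishing in Lagrange's proof: if F(z) = f₁z + f₂z² + ··· with f₁ invertible, and k ≠ n are integers, then the coefficient of z^0 in F(z)^{k-1-n}·ϑF(z) is zero, where ϑF(z) = z·F'(z). -/

import Mathlib

/-!
Write `m = k - 1 - n`. For `m ≥ 0` the product is a power series divisible by `z`. For
`m = -(c + 2)` write `F = z·U` with `U` a unit and `V = U⁻¹`; then
`F^m · ϑF = z^{-(c+1)} (V^{c+1} - z V^c V')`, and the constant term vanishes because
`[z^{c+1}] V^{c+1} = [z^{c+1}] ϑ(V^{c+1}) / (c + 1) = [z^{c+1}] z V^c V'`. The division by `c + 1`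
is avoided by proving this coefficient identity for the generic series `∑ xᵢ zⁱ` over the
torsion-free ring `ℤ[x₀, x₁, …]` and specialising.
-/

open PowerSeries HahnSeries

namespace PowerSeries

section CommSemiring

variable {R : Type*} [CommSemiring R]

theorem coeff_X_mul_derivative (f : R⟦X⟧) (n : ℕ) :
    coeff n (X * d⁄dX R f) = n * coeff n f := by
  cases n with
  | zero => simp
  | succ n => rw [coeff_succ_X_mul, coeff_derivative]; push_cast; ring

theorem map_derivative {S : Type*} [CommSemiring S] (φ : R →+* S) (f : R⟦X⟧) :
    map φ (d⁄dX R f) = d⁄dX S (map φ f) := by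
  ext n
  simp [coeff_derivative]

theorem coeff_pow_succ_eq_coeff_X_mul_pow_mul_derivative_of_isAddTorsionFree
    [IsAddTorsionFree R] (v : R⟦X⟧) (c : ℕ) :
    coeff (c + 1) (v ^ (c + 1)) = coeff (c + 1) (X * v ^ c * d⁄dX R v) := by
  apply nsmul_right_injective c.succ_ne_zero
  calc (c + 1) • coeff (c + 1) (v ^ (c + 1))
      = coeff (c + 1) (X * d⁄dX R (v ^ (c + 1))) := by
        rw [coeff_X_mul_derivative, nsmul_eq_mul]
    _ = (c + 1) • coeff (c + 1) (X * v ^ c * d⁄dX R v) := by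
        rw [derivative_pow, ← map_nsmul]
        congr 1
        rw [Nat.add_sub_cancel, nsmul_eq_mul]
        push_cast
        ring

end CommSemiring

section CommRing

variable {R : Type*} [CommRing R]

theorem coeff_pow_succ_eq_coeff_X_mul_pow_mul_derivative (v : R⟦X⟧) (c : ℕ) :
    coeff (c + 1) (v ^ (c + 1)) = coeff (c + 1) (X * v ^ c * d⁄dX R v) := by
  let φ : MvPolynomial ℕ ℤ →+* R := MvPolynomial.eval₂Hom (Int.castRingHom R) (coeff · v)
  have hφ : map φ (mk MvPolynomial.X) = v := by ext n; simp [φ]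
  have h := congrArg φ
    (coeff_pow_succ_eq_coeff_X_mul_pow_mul_derivative_of_isAddTorsionFree (mk MvPolynomial.X) c)
  rw [← coeff_map, ← coeff_map] at h
  simpa [map_derivative, hφ] using h

theorem exists_eq_X_mul_unit {F : R⟦X⟧} (h0 : constantCoeff F = 0) (h1 : IsUnit (coeff 1 F)) :
    ∃ U : R⟦X⟧ˣ, F = X * (U : R⟦X⟧) := by
  obtain ⟨u, rfl⟩ := X_dvd_iff.mpr h0
  rw [coeff_succ_X_mul, coeff_zero_eq_constantCoeff_apply] at h1
  exact ⟨(isUnit_iff_constantCoeff.mpr h1).unit, rfl⟩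

theorem pow_mul_X_mul_derivative_X_mul {u v : R⟦X⟧} (huv : u * v = 1) (c : ℕ) :
    v ^ (c + 2) * (X * d⁄dX R (X * u)) = X * (v ^ (c + 1) - X * v ^ c * d⁄dX R v) := by
  have hd : u * d⁄dX R v + v * d⁄dX R u = 0 := by
    simpa [smul_eq_mul] using congrArg (d⁄dX R) huv
  rw [Derivation.leibniz, derivative_X, smul_eq_mul, smul_eq_mul]
  linear_combination (X * v ^ (c + 1) - X ^ 2 * v ^ c * d⁄dX R v) * huv +
    X ^ 2 * v ^ (c + 1) * hd

end CommRing

end PowerSeries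

theorem coeff_zero_ofPowerSeries_pow_mul_X_mul {R : Type*} [CommSemiring R] (F G : R⟦X⟧)
    (m : ℕ) : (ofPowerSeries ℤ R F ^ m * ofPowerSeries ℤ R (X * G)).coeff 0 = 0 := by
  rw [← map_pow, ← map_mul, mul_left_comm]
  exact (ofPowerSeries_apply_coeff _ 0).trans (coeff_zero_X_mul _)

theorem coeff_zero_single_neg_mul_ofPowerSeries {R : Type*} [Semiring R] (n : ℕ) (f : R⟦X⟧) :
    (single (-(n : ℤ)) (1 : R) * ofPowerSeries ℤ R f).coeff 0 = coeff n f := by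
  simpa using coeff_single_mul_add (r := (1 : R)) (x := ofPowerSeries ℤ R f) (a := (n : ℤ))
    (b := -(n : ℤ))

section Field

variable {K : Type*} [Field K]

theorem ofPowerSeries_X_mul_zpow_neg (U : K⟦X⟧ˣ) (c : ℕ) :
    ofPowerSeries ℤ K (X * (U : K⟦X⟧)) ^ (-(c : ℤ)) =
      single (-(c : ℤ)) 1 * ofPowerSeries ℤ K (↑U⁻¹ ^ c) := by
  rw [map_mul, ofPowerSeries_X, mul_zpow, ← RatFunc.single_zpow, zpow_neg, zpow_natCast,
    ← inv_pow, ← map_units_inv, map_pow]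

theorem coeff_zero_ofPowerSeries_X_mul_zpow_neg_mul_X_mul_derivative (U : K⟦X⟧ˣ) (c : ℕ) :
    (ofPowerSeries ℤ K (X * (U : K⟦X⟧)) ^ (-((c + 2 : ℕ) : ℤ)) *
      ofPowerSeries ℤ K (X * d⁄dX K (X * (U : K⟦X⟧)))).coeff 0 = 0 := by
  rw [ofPowerSeries_X_mul_zpow_neg, mul_assoc, ← map_mul,
    pow_mul_X_mul_derivative_X_mul U.mul_inv c, map_mul, ofPowerSeries_X, ← mul_assoc,
    single_mul_single, one_mul,
    show -((c + 2 : ℕ) : ℤ) + 1 = -((c + 1 : ℕ) : ℤ) by push_cast; ring,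
    coeff_zero_single_neg_mul_ofPowerSeries, map_sub,
    coeff_pow_succ_eq_coeff_X_mul_pow_mul_derivative, sub_self]

end Field

/-- Constant-term vanishing in Lagrange's proof: if `F(z) = f₁z + f₂z² + ···` with `f₁ ≠ 0`,
and `k ≠ n` are integers, then the coefficient of `z^0` in `F(z)^{k-1-n}·ϑF(z)` is zero,
where `ϑF(z) = z·F'(z)` and the power is taken in the field of formal Laurent series. -/
theorem constant_term_vanishing {K : Type*} [Field K] (F : PowerSeries K)
    (hF0 : PowerSeries.constantCoeff F = 0) (hF1 : PowerSeries.coeff 1 F ≠ 0)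
    (k n : ℤ) (hkn : k ≠ n) :
    (((HahnSeries.ofPowerSeries ℤ K F : LaurentSeries K) ^ (k - 1 - n))
        * (HahnSeries.ofPowerSeries ℤ K
            (PowerSeries.X * PowerSeries.derivative K F) : LaurentSeries K)).coeff 0 = 0 := by
  rcases le_or_gt 0 (k - 1 - n) with hm | hm
  · lift k - 1 - n to ℕ using hm with m
    rw [zpow_natCast]
    exact coeff_zero_ofPowerSeries_pow_mul_X_mul _ _ m
  · obtain ⟨U, rfl⟩ := exists_eq_X_mul_unit hF0 (isUnit_iff_ne_zero.mpr hF1)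
    obtain ⟨c, hc⟩ : ∃ c : ℕ, k - 1 - n = -((c + 2 : ℕ) : ℤ) := ⟨(n - k - 1).toNat, by omega⟩
    rw [hc]
    exact coeff_zero_ofPowerSeries_X_mul_zpow_neg_mul_X_mul_derivative U c
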